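/- Let R be a principal ideal domain and let α : R^m → R^n be an R-linear map between finite free R-modules with standard bases (e₁, ..., e_m) and (f₁, ..., f_n). Then there exist R-linear automorphisms φ of R^m and ψ of R^n such that the composite ψ ∘ α ∘ φ is diagonal with respect to the standard bases: for every i and j with i ≠ j, the j-th coordinate of (ψ ∘ α ∘ φ)(e_i) is zero; equivalently, for each i ≤ min(m, n) there exists r_i ∈ R with (ψ ∘ α ∘ φ)(e_i) = r_i · f_i, and (ψ ∘ α ∘ φ)(e_i) = 0 for i > n. -/

import Mathlib

/-! The image of `α` is a submodule of a free module of finite rank over a PID, so the Smith normal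
form provides a basis `(f j)` of the target and elements `a i` with `(a i • f (σ i))` a basis of the
image. The image is free, hence projective, so `α` splits and the source is the direct sum of a
lift of the image and of `ker α`, which is again free. The basis of the source made of lifts of the
`a i • f (σ i)` followed by a basis of the kernel is carried by `α` to multiples of the basis
vectors `f (σ i)` and to `0`; it remains to number both bases so that `i` and `σ i` get the same
index. -/

open Module

theorem Function.Embedding.exists_equiv_fin_val_apply {ι : Type*} [Fintype ι] {k n : ℕ}
    (f : Fin k ↪ ι) (hn : Fintype.card ι = n) :
    ∃ e : ι ≃ Fin n, ∀ i, (e (f i) : ℕ) = i := by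
  classical
  let e₀ : ι ≃ Fin k ⊕ Fin (Fintype.card ((Set.range f)ᶜ : Set ι)) :=
    (Equiv.Set.sumCompl (Set.range f)).symm.trans
      ((Equiv.ofInjective f f.injective).symm.sumCongr (Fintype.equivFin _))
  have he₀ : ∀ i, e₀ (f i) = Sum.inl i := fun i => by
    simp [e₀, Equiv.Set.sumCompl_symm_apply_of_mem (Set.mem_range_self i)]
  have hcard : k + Fintype.card ((Set.range f)ᶜ : Set ι) = n := by
    simpa [hn] using (Fintype.card_congr e₀).symm
  exact ⟨e₀.trans (finSumFinEquiv.trans (finCongr hcard)), fun i => by simp [he₀]⟩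

section

variable {R M N : Type*} [CommRing R] [IsDomain R] [IsPrincipalIdealRing R]
  [AddCommGroup M] [Module R M] [AddCommGroup N] [Module R N]

theorem LinearMap.exists_basis_sum_of_basis_range [Free R M] [Module.Finite R M]
    (α : M →ₗ[R] N) {κ : Type*} (bP : Basis κ R (LinearMap.range α)) :
    ∃ (d : ℕ) (b : Basis (κ ⊕ Fin d) R M),
      (∀ i, α (b (Sum.inl i)) = bP i) ∧ ∀ j, α (b (Sum.inr j)) = 0 := by
  have : Free R (LinearMap.range α) := .of_basis bP
  obtain ⟨s, hs⟩ := projective_lifting_property α.rangeRestrict LinearMap.id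
    α.surjective_rangeRestrict
  obtain ⟨e, -, he⟩ := (LinearMap.exact_subtype_ker_map α.rangeRestrict).splitSurjectiveEquiv
    (Submodule.injective_subtype _) ⟨s, hs⟩
  obtain ⟨d, bK⟩ := (LinearMap.ker α.rangeRestrict).basisOfPid (Free.chooseBasis R M)
  have hα : ∀ x, α x = (e x).2 := fun x => congrArg Subtype.val (LinearMap.congr_fun he x)
  exact ⟨d, (bP.prod bK).map ((LinearEquiv.prodComm R _ _).trans e.symm),
    fun i => by simp [hα], fun j => by simp [hα]⟩

variable [Free R M] [Module.Finite R M] [Free R N] [Module.Finite R N]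

theorem LinearMap.exists_basis_apply_eq_smul_basis (α : M →ₗ[R] N) :
    ∃ (k d : ℕ) (bM : Basis (Fin k ⊕ Fin d) R M) (bN : Basis (Free.ChooseBasisIndex R N) R N)
      (f : Fin k ↪ Free.ChooseBasisIndex R N) (a : Fin k → R),
      (∀ i, α (bM (Sum.inl i)) = a i • bN (f i)) ∧ ∀ j, α (bM (Sum.inr j)) = 0 := by
  obtain ⟨k, ⟨bN, bP, f, a, hbP⟩⟩ := (LinearMap.range α).smithNormalForm (Free.chooseBasis R N)
  obtain ⟨d, bM, hinl, hinr⟩ := α.exists_basis_sum_of_basis_range bP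
  exact ⟨k, d, bM, bN, f, a, fun i => (hinl i).trans (hbP i), hinr⟩

theorem LinearMap.exists_basis_repr_apply_eq_zero_of_val_ne (α : M →ₗ[R] N) {m n : ℕ}
    (hm : finrank R M = m) (hn : finrank R N = n) :
    ∃ (bM : Basis (Fin m) R M) (bN : Basis (Fin n) R N),
      ∀ (i : Fin m) (j : Fin n), (i : ℕ) ≠ j → bN.repr (α (bM i)) j = 0 := by
  obtain ⟨k, d, bM, bN, f, a, hinl, hinr⟩ := α.exists_basis_apply_eq_smul_basis
  obtain ⟨eM, heM⟩ := (Function.Embedding.inl : Fin k ↪ Fin k ⊕ Fin d).exists_equiv_fin_val_apply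
    ((finrank_eq_card_basis bM).symm.trans hm)
  obtain ⟨eN, heN⟩ := f.exists_equiv_fin_val_apply ((finrank_eq_card_basis bN).symm.trans hn)
  refine ⟨bM.reindex eM, bN.reindex eN, fun i j hij => ?_⟩
  obtain ⟨x | x, rfl⟩ := eM.surjective i
  · have hne : eN (f x) ≠ j := fun h => hij (by rw [← h, heN]; exact heM x)
    simp [hinl, hne]
  · simp [hinr]

end

/-- over a principal ideal domain `R`, any linear map `α : R^m → R^n` can be
diagonalized: there are `R`-linear automorphisms `φ` of `R^m` and `ψ` of `R^n` such that
`ψ ∘ α ∘ φ` sends the `i`-th standard basis vector of `R^m` to a multiple of the `i`-th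
standard basis vector of `R^n`, i.e. all of its other coordinates vanish. -/
theorem stmt11 {R : Type*} [CommRing R] [IsDomain R] [IsPrincipalIdealRing R]
    (m n : ℕ) (α : (Fin m → R) →ₗ[R] (Fin n → R)) :
    ∃ (φ : (Fin m → R) ≃ₗ[R] (Fin m → R)) (ψ : (Fin n → R) ≃ₗ[R] (Fin n → R)),
      ∀ (i : Fin m) (j : Fin n), (i : ℕ) ≠ (j : ℕ) →
        ψ (α (φ (Pi.single i 1))) j = 0 := by
  obtain ⟨bM, bN, hdiag⟩ :=
    α.exists_basis_repr_apply_eq_zero_of_val_ne (finrank_fin_fun R) (finrank_fin_fun R)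
  refine ⟨bM.equivFun.symm, bN.equivFun, fun i j hij => ?_⟩
  simpa [Basis.equivFun_symm_single] using hdiag i j hij
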